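/- arXiv:2004.05144 — 2 statements merged into one kernel-verified Lean document; each statement's English description precedes it below -/
import Mathlib

section
/- Let p be a prime, R a commutative local ring of characteristic p, and G a finite abelian p-group. Then the group algebra R[G] is a local ring, whose maximal ideal is the preimage under the augmentation map ε of the maximal ideal of R. -/
/-!
In characteristic `p`, `(g - 1) ^ p ^ k = g ^ p ^ k - 1 = 0` for every element `g` of a `p`-group.
Since the kernel of the augmentation is spanned by the elements `g - 1`, it is a nil ideal, so it
lies in every maximal ideal of `R[G]`. As the augmentation is surjective, the maximal ideals of
`R[G]` are then the preimages of the maximal ideals of `R`, and `R` has only one.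
-/

/-- The augmentation map of the group algebra `R[G]`: the `R`-algebra homomorphism
sending every group element to `1`. -/
noncomputable def augmentation (R : Type*) [CommRing R] (G : Type*) [CommGroup G] :
    MonoidAlgebra R G →ₐ[R] R :=
  MonoidAlgebra.lift R R G 1

open MonoidAlgebra IsLocalRing

theorem isNilpotent_sub_one_of_pow_expChar_pow_eq_one {A : Type*} [CommRing A] (p : ℕ)
    [ExpChar A p] {x : A} {k : ℕ} (hx : x ^ p ^ k = 1) : IsNilpotent (x - 1) :=
  ⟨p ^ k, by rw [sub_pow_expChar_pow, hx, one_pow, sub_self]⟩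

theorem ideal_eq_comap_maximalIdeal_of_ker_le_nilradical {A B F : Type*} [CommRing A] [CommRing B]
    [IsLocalRing B] [FunLike F A B] [RingHomClass F A B] {f : F} (hf : Function.Surjective f)
    (hker : RingHom.ker f ≤ nilradical A) {I : Ideal A} (hI : I.IsMaximal) :
    I = (maximalIdeal B).comap f := by
  have hkerI : RingHom.ker f ≤ I := hker.trans (nilradical_le_prime I)
  have hcomap : (I.map f).comap f = I := by
    rw [Ideal.comap_map_of_surjective' f hf, sup_eq_left.mpr hkerI]
  have hmap : I.map f ≠ ⊤ := fun h => hI.ne_top (by rw [← hcomap, h, Ideal.comap_top])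
  exact hI.eq_of_le (Ideal.comap_isMaximal_of_surjective f hf).ne_top
    (hcomap ▸ Ideal.comap_mono (le_maximalIdeal hmap))

theorem isLocalRing_of_surjective_of_ker_le_nilradical {A B F : Type*} [CommRing A] [CommRing B]
    [IsLocalRing B] [FunLike F A B] [RingHomClass F A B] {f : F} (hf : Function.Surjective f)
    (hker : RingHom.ker f ≤ nilradical A) : IsLocalRing A :=
  .of_unique_max_ideal ⟨_, Ideal.comap_isMaximal_of_surjective f hf,
    fun _ hI => ideal_eq_comap_maximalIdeal_of_ker_le_nilradical hf hker hI⟩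

namespace MonoidAlgebra

theorem expChar (R : Type*) [CommRing R] (G : Type*) [Monoid G] (p : ℕ) [ExpChar R p] :
    ExpChar (MonoidAlgebra R G) p :=
  expChar_of_injective_algebraMap single_right_injective p

end MonoidAlgebra

section augmentation

variable (R : Type*) [CommRing R] (G : Type*) [CommGroup G]

@[simp]
theorem augmentation_single (g : G) (r : R) : augmentation R G (single g r) = r := by
  simp [augmentation, lift_single]

theorem augmentation_surjective : Function.Surjective (augmentation R G) :=
  fun r => ⟨algebraMap R _ r, (augmentation R G).commutes r⟩

theorem sub_algebraMap_augmentation_mem_span (x : MonoidAlgebra R G) :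
    x - algebraMap R _ (augmentation R G x) ∈ Ideal.span (Set.range fun g => of R G g - 1) := by
  induction x using MonoidAlgebra.induction_linear with
  | zero => simp
  | add x y hx hy =>
    simpa only [map_add, add_sub_add_comm] using Ideal.add_mem _ hx hy
  | single g r =>
    have : single g r - algebraMap R _ r = algebraMap R _ r * (of R G g - 1) := by
      rw [mul_sub, mul_one, coe_algebraMap]
      simp [single_mul_single]
    rw [augmentation_single, this]
    exact Ideal.mul_mem_left _ _ (Ideal.subset_span ⟨g, rfl⟩)

theorem ker_augmentation_eq_span :
    RingHom.ker (augmentation R G) = Ideal.span (Set.range fun g => of R G g - 1) := by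
  refine le_antisymm (fun x hx => ?_) (Ideal.span_le.mpr ?_)
  · simpa [(RingHom.mem_ker).mp hx] using sub_algebraMap_augmentation_mem_span R G x
  · rintro _ ⟨g, rfl⟩
    simp [RingHom.mem_ker]

theorem ker_augmentation_le_nilradical (p : ℕ) [ExpChar R p] (hG : IsPGroup p G) :
    RingHom.ker (augmentation R G) ≤ nilradical (MonoidAlgebra R G) := by
  have := MonoidAlgebra.expChar R G p
  rw [ker_augmentation_eq_span, Ideal.span_le]
  rintro _ ⟨g, rfl⟩
  obtain ⟨k, hk⟩ := hG g
  exact isNilpotent_sub_one_of_pow_expChar_pow_eq_one p (by rw [← map_pow, hk, map_one])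

end augmentation

theorem stmt2_general (p : ℕ) (hp : p.Prime) (R : Type*) [CommRing R] [CharP R p] [IsLocalRing R]
    (G : Type*) [CommGroup G] (hG : IsPGroup p G) :
    IsLocalRing (MonoidAlgebra R G) ∧
    (Ideal.comap (augmentation R G) (IsLocalRing.maximalIdeal R)).IsMaximal ∧
    ∀ I : Ideal (MonoidAlgebra R G), I.IsMaximal →
      I = Ideal.comap (augmentation R G) (IsLocalRing.maximalIdeal R) := by
  have : ExpChar R p := .prime hp
  have hsurj := augmentation_surjective R G
  have hker := ker_augmentation_le_nilradical R G p hG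
  exact ⟨isLocalRing_of_surjective_of_ker_le_nilradical hsurj hker,
    Ideal.comap_isMaximal_of_surjective _ hsurj,
    fun _ => ideal_eq_comap_maximalIdeal_of_ker_le_nilradical hsurj hker⟩

/-- If `R` is a commutative local ring of characteristic `p` and `G` is a
finite abelian `p`-group, then `R[G]` is a local ring whose maximal ideal is the preimage
under the augmentation map of the maximal ideal of `R`. -/
theorem stmt2 (p : ℕ) (hp : p.Prime) (R : Type*) [CommRing R] [CharP R p] [IsLocalRing R]
    (G : Type*) [CommGroup G] [Fintype G] (hG : IsPGroup p G) :
    IsLocalRing (MonoidAlgebra R G) ∧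
    (Ideal.comap (augmentation R G) (IsLocalRing.maximalIdeal R)).IsMaximal ∧
    ∀ I : Ideal (MonoidAlgebra R G), I.IsMaximal →
      I = Ideal.comap (augmentation R G) (IsLocalRing.maximalIdeal R) :=
  stmt2_general p hp R G hG
end

section
/- Let p be a prime, R a commutative ring of characteristic p, and G a finite abelian p-group. For every x ∈ R[G] one has x^{|G|} = ε(x)^{|G|} (the right-hand side viewed in R ⊆ R[G]); consequently, x is a unit of R[G] if and only if ε(x) is a unit of R. -/
/-!
Write `|G| = p ^ n`. In characteristic `p` the map `x ↦ x ^ p ^ n` is additive, and on a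
monomial it gives `(r • g) ^ p ^ n = r ^ p ^ n • g ^ p ^ n = r ^ p ^ n` because `g ^ |G| = 1`.
Hence `x ^ |G|` is the constant `(∑ r_g) ^ |G| = ε(x) ^ |G|`. In particular `x` is a unit as
soon as `ε(x)` is, since then `x ^ |G|` is.
-/

namespace MonoidAlgebra

variable {R G : Type*} [CommRing R]

instance expChar_s3 [Monoid G] (p : ℕ) [ExpChar R p] : ExpChar (MonoidAlgebra R G) p :=
  expChar_of_injective_algebraMap (FaithfulSMul.algebraMap_injective R _) p

variable [CommGroup G]

@[simp]
theorem augmentation_single (g : G) (r : R) : augmentation R G (single g r) = r := by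
  simp [augmentation, lift_single]

theorem pow_expChar_pow_eq_algebraMap_augmentation (p n : ℕ) [ExpChar R p]
    (hG : ∀ g : G, g ^ p ^ n = 1) (x : MonoidAlgebra R G) :
    x ^ p ^ n = algebraMap R (MonoidAlgebra R G) (augmentation R G x ^ p ^ n) := by
  induction x using induction_linear with
  | zero => simp [zero_pow (expChar_pow_pos R p n).ne']
  | add x y hx hy => rw [add_pow_expChar_pow, hx, hy, map_add, add_pow_expChar_pow, map_add]
  | single g r => rw [single_pow, hG, augmentation_single]; rfl

end MonoidAlgebra

/-- For `R` a commutative ring of characteristic `p` and `G` a finite abelian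
`p`-group: every `x ∈ R[G]` satisfies `x ^ |G| = ε(x) ^ |G|` (viewed in `R ⊆ R[G]`), and `x` is
a unit of `R[G]` iff `ε(x)` is a unit of `R`. -/
theorem stmt3 (p : ℕ) (hp : p.Prime) (R : Type*) [CommRing R] [CharP R p]
    (G : Type*) [CommGroup G] [Fintype G] (hG : IsPGroup p G)
    (x : MonoidAlgebra R G) :
    x ^ Fintype.card G
      = algebraMap R (MonoidAlgebra R G) (augmentation R G x ^ Fintype.card G) ∧
    (IsUnit x ↔ IsUnit (augmentation R G x)) := by
  have : Fact p.Prime := ⟨hp⟩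
  obtain ⟨n, hn⟩ := hG.exists_card_eq
  rw [Nat.card_eq_fintype_card] at hn
  have hpow : x ^ Fintype.card G
      = algebraMap R (MonoidAlgebra R G) (augmentation R G x ^ Fintype.card G) := by
    rw [hn]
    exact MonoidAlgebra.pow_expChar_pow_eq_algebraMap_augmentation p n
      (fun g => hn ▸ pow_card_eq_one) x
  refine ⟨hpow, fun hx => hx.map _, fun hε => ?_⟩
  rw [← isUnit_pow_iff (Fintype.card_ne_zero (α := G)), hpow]
  exact (hε.pow _).map _
end
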